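/- Let A, B, C be real numbers with H := B^2 + A*C > 0. Then for all c₁, c₂ ∈ ℝ, (c₂^2*A - c₁^2*C - 2*c₁*c₂*B)/H ≤ 2*(c₁^2 + c₂^2)/μ, where μ = C - A + sqrt((A+C)^2 + 4B^2) > 0. -/

import Mathlib

/-!
Put `s = √((A + C)² + 4B²)`. Then `s² - (A - C)² = 4H`, so `s > |A - C|`, which gives `μ > 0`,
and `μ (s + A - C) = 4H`. Clearing denominators, the inequality becomes
`(A + C)(c₂² - c₁²) - 4B c₁c₂ ≤ s (c₁² + c₂²)`: the left side is a trace-free quadratic form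
whose eigenvalues are `±s`.
-/

open Real

theorem mul_sub_sq_sub_le_sqrt_mul (p q x y : ℝ) :
    p * (y ^ 2 - x ^ 2) - 2 * q * x * y ≤ √(p ^ 2 + q ^ 2) * (x ^ 2 + y ^ 2) := by
  have lagrange : (p * (y ^ 2 - x ^ 2) - 2 * q * x * y) ^ 2
      + (2 * p * x * y + q * (y ^ 2 - x ^ 2)) ^ 2 = (p ^ 2 + q ^ 2) * (x ^ 2 + y ^ 2) ^ 2 := by
    ring
  calc p * (y ^ 2 - x ^ 2) - 2 * q * x * y
      ≤ √((p ^ 2 + q ^ 2) * (x ^ 2 + y ^ 2) ^ 2) :=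
        (le_abs_self _).trans <| abs_le_sqrt <| lagrange ▸ le_add_of_nonneg_right (sq_nonneg _)
    _ = √(p ^ 2 + q ^ 2) * (x ^ 2 + y ^ 2) := by
        rw [sqrt_mul (by positivity), sqrt_sq (by positivity)]

theorem sq_sqrt_sub_sq (A B C : ℝ) :
    √((A + C) ^ 2 + 4 * B ^ 2) ^ 2 - (A - C) ^ 2 = 4 * (B ^ 2 + A * C) := by
  rw [sq_sqrt (by positivity)]
  ring

theorem sub_lt_sqrt_of_pos {A B C : ℝ} (h : 0 < B ^ 2 + A * C) :
    A - C < √((A + C) ^ 2 + 4 * B ^ 2) :=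
  (le_abs_self _).trans_lt <| lt_sqrt_of_sq_lt <| by rw [sq_abs]; nlinarith

theorem stmt_4 (A B C H μ : ℝ) (hH : H = B ^ 2 + A * C) (hHpos : 0 < H)
    (hμ : μ = C - A + Real.sqrt ((A + C) ^ 2 + 4 * B ^ 2)) :
    0 < μ ∧ ∀ c₁ c₂ : ℝ,
      (c₂ ^ 2 * A - c₁ ^ 2 * C - 2 * c₁ * c₂ * B) / H ≤ 2 * (c₁ ^ 2 + c₂ ^ 2) / μ := by
  set s := √((A + C) ^ 2 + 4 * B ^ 2)
  have hμpos : 0 < μ := by linarith [sub_lt_sqrt_of_pos (hH ▸ hHpos)]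
  refine ⟨hμpos, fun c₁ c₂ => ?_⟩
  have hfactor : μ * (s + A - C) = 4 * H := by rw [hμ, hH, ← sq_sqrt_sub_sq]; ring
  have key : 2 * (c₂ ^ 2 * A - c₁ ^ 2 * C - 2 * c₁ * c₂ * B) ≤
      (c₁ ^ 2 + c₂ ^ 2) * (s + A - C) := by
    have h := mul_sub_sq_sub_le_sqrt_mul (A + C) (2 * B) c₁ c₂
    rw [mul_pow, show (2 : ℝ) ^ 2 = 4 by norm_num] at h
    linarith
  rw [div_le_div_iff₀ hHpos hμpos]
  linear_combination (μ / 2) * key + (c₁ ^ 2 + c₂ ^ 2) / 2 * hfactor
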